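/- Let T : V → g be an O-operator on a Lie algebra g with respect to a representation (V;ρ), and let x ∈ g be a Nijenhuis element, i.e. (1) [[x,y],[x,z]] = 0 for all y,z ∈ g, (2) ρ([x,y])∘ρ(x) = 0 for all y ∈ g, and (3) [x, [Tu,x] + T(ρ(x)u)] = 0 for all u ∈ V. Define Ť(u) := T(ρ(x)u) + [Tu, x]. Then for all u,v ∈ V, [Ťu, Ťv] = Ť(ρ(Ťu)v − ρ(Ťv)u), i.e. Ť is itself an O-operator. -/

import Mathlib

attribute [local instance 100] LieRing.ofAssociativeRing

/-!
Write `Ť = S + R` with `S u = T (ρ x u)` and `R u = ⁅T u, x⁆`. Then `⁅Ťu, Ťv⁆` splits as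
`⁅Su, Sv⁆ + (⁅Su, Rv⁆ + ⁅Ru, Sv⁆) + ⁅Ru, Rv⁆`, and with `w = ρ(Ťu)v - ρ(Ťv)u` the three
pieces are `S w`, `R w` and `0` respectively: the last by condition (1); the first by the
O-operator identity for `T`, where condition (2) kills `ρ(Ru) ∘ ρ(x)`; the middle one by the
Jacobi identity, where condition (3) trades `⁅S u, x⁆` for `⁅x, R u⁆`.
-/

theorem LieHom.map_lie_apply {R L M : Type*} [CommRing R] [LieRing L] [LieAlgebra R L]
    [AddCommGroup M] [Module R M] (ρ : L →ₗ⁅R⁆ Module.End R M) (a b : L) (m : M) :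
    ρ ⁅a, b⁆ m = ρ a (ρ b m) - ρ b (ρ a m) := by
  rw [LieHom.map_lie, Ring.lie_def, LinearMap.sub_apply, Module.End.mul_apply,
    Module.End.mul_apply]

section NijenhuisElement

variable {K : Type*} [CommRing K] {g : Type*} [LieRing g] [LieAlgebra K g]
  {V : Type*} [AddCommGroup V] [Module K V]

def IsOOperator (ρ : g →ₗ⁅K⁆ Module.End K V) (T : V → g) : Prop :=
  ∀ u v : V, ⁅T u, T v⁆ = T (ρ (T u) v - ρ (T v) u)

def nijenhuisTwist (ρ : g →ₗ⁅K⁆ Module.End K V) (T : V →ₗ[K] g) (x : g) (u : V) : g :=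
  T (ρ x u) + ⁅T u, x⁆

variable (ρ : g →ₗ⁅K⁆ Module.End K V) (T : V →ₗ[K] g) {x : g}

theorem lie_lie_x_lie_x_eq_zero (h1 : ∀ y z : g, ⁅⁅x, y⁆, ⁅x, z⁆⁆ = 0) (a b : g) :
    ⁅⁅a, x⁆, ⁅b, x⁆⁆ = 0 := by
  rw [← lie_skew a x, ← lie_skew b x, neg_lie, lie_neg, neg_neg, h1]

theorem rho_lie_x_lie_x_apply (h2 : ∀ y : g, ∀ u : V, ρ ⁅x, y⁆ (ρ x u) = 0)
    (y : g) (w : V) :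
    ρ ⁅x, ⁅y, x⁆⁆ w = ρ x (ρ ⁅y, x⁆ w) := by
  have hyx : ρ ⁅y, x⁆ (ρ x w) = 0 := by
    rw [← lie_skew y x, map_neg, LinearMap.neg_apply, h2, neg_zero]
  rw [ρ.map_lie_apply, hyx, sub_zero]

theorem lie_x_T_rho_x_eq_neg (h3 : ∀ u : V, ⁅x, ⁅T u, x⁆ + T (ρ x u)⁆ = 0) (u : V) :
    ⁅x, T (ρ x u)⁆ = -⁅x, ⁅T u, x⁆⁆ :=
  eq_neg_of_add_eq_zero_right (by rw [← lie_add, h3])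

theorem lie_T_rho_x_x_eq (h3 : ∀ u : V, ⁅x, ⁅T u, x⁆ + T (ρ x u)⁆ = 0) (u : V) :
    ⁅T (ρ x u), x⁆ = ⁅x, ⁅T u, x⁆⁆ := by
  rw [← lie_skew, lie_x_T_rho_x_eq_neg ρ T h3, neg_neg]

theorem lie_T_rho_x_T_rho_x (hT : IsOOperator ρ T)
    (h2 : ∀ y : g, ∀ u : V, ρ ⁅x, y⁆ (ρ x u) = 0)
    (h3 : ∀ u : V, ⁅x, ⁅T u, x⁆ + T (ρ x u)⁆ = 0) (u v : V) :
    ⁅T (ρ x u), T (ρ x v)⁆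
      = T (ρ x (ρ (nijenhuisTwist ρ T x u) v - ρ (nijenhuisTwist ρ T x v) u)) := by
  -- `ρ(Su)` and `ρ(x)` commute up to `ρ⁅x, Ru⁆ = ρ(x) ∘ ρ(Ru)`.
  have hcomm : ∀ a b : V, ρ (T (ρ x a)) (ρ x b)
      = ρ x (ρ (T (ρ x a)) b) + ρ x (ρ ⁅T a, x⁆ b) := by
    intro a b
    have h := ρ.map_lie_apply x (T (ρ x a)) b
    rw [lie_x_T_rho_x_eq_neg ρ T h3, map_neg, LinearMap.neg_apply,
      rho_lie_x_lie_x_apply ρ h2] at h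
    linear_combination (norm := abel) h
  rw [hT, hcomm, hcomm, nijenhuisTwist, nijenhuisTwist]
  simp only [map_add, map_sub, LinearMap.add_apply]

theorem lie_T_rho_x_lie_x_add_lie_lie_x_T_rho_x (hT : IsOOperator ρ T)
    (h1 : ∀ y z : g, ⁅⁅x, y⁆, ⁅x, z⁆⁆ = 0)
    (h3 : ∀ u : V, ⁅x, ⁅T u, x⁆ + T (ρ x u)⁆ = 0) (u v : V) :
    ⁅T (ρ x u), ⁅T v, x⁆⁆ + ⁅⁅T u, x⁆, T (ρ x v)⁆
      = ⁅T (ρ (nijenhuisTwist ρ T x u) v - ρ (nijenhuisTwist ρ T x v) u), x⁆ := by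
  have hcross : ∀ a b : V, ⁅T (ρ x a), ⁅T b, x⁆⁆
      = ⁅T (ρ (T (ρ x a)) b - ρ (T b) (ρ x a)), x⁆ + ⁅x, ⁅T b, ⁅T a, x⁆⁆⁆ := by
    intro a b
    rw [leibniz_lie, hT, lie_T_rho_x_x_eq ρ T h3, leibniz_lie (T b) x,
      lie_lie_x_lie_x_eq_zero h1, zero_add]
  have hjacobi : ⁅x, ⁅T v, ⁅T u, x⁆⁆⁆ - ⁅x, ⁅T u, ⁅T v, x⁆⁆⁆
      = -⁅T (ρ x (ρ (T u) v - ρ (T v) u)), x⁆ := by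
    rw [← lie_sub, leibniz_lie (T v) (T u) x, add_sub_cancel_right, ← lie_skew (T v) (T u), hT,
      neg_lie, lie_neg, ← lie_x_T_rho_x_eq_neg ρ T h3]
    exact (lie_skew _ _).symm
  rw [← lie_skew ⁅T u, x⁆, hcross, hcross, nijenhuisTwist, nijenhuisTwist]
  simp only [map_add, map_sub, LinearMap.add_apply, ρ.map_lie_apply, sub_lie, add_lie]
    at hjacobi ⊢
  linear_combination (norm := abel) hjacobi

theorem isOOperator_nijenhuisTwist (hT : IsOOperator ρ T)
    (h1 : ∀ y z : g, ⁅⁅x, y⁆, ⁅x, z⁆⁆ = 0)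
    (h2 : ∀ y : g, ∀ u : V, ρ ⁅x, y⁆ (ρ x u) = 0)
    (h3 : ∀ u : V, ⁅x, ⁅T u, x⁆ + T (ρ x u)⁆ = 0) :
    IsOOperator ρ (nijenhuisTwist ρ T x) := by
  intro u v
  calc ⁅nijenhuisTwist ρ T x u, nijenhuisTwist ρ T x v⁆
      = ⁅T (ρ x u), T (ρ x v)⁆ + (⁅T (ρ x u), ⁅T v, x⁆⁆ + ⁅⁅T u, x⁆, T (ρ x v)⁆)
          + ⁅⁅T u, x⁆, ⁅T v, x⁆⁆ := by
        simp only [nijenhuisTwist, lie_add, add_lie]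
        abel
    _ = _ := by
        rw [lie_T_rho_x_T_rho_x ρ T hT h2 h3,
          lie_T_rho_x_lie_x_add_lie_lie_x_T_rho_x ρ T hT h1 h3, lie_lie_x_lie_x_eq_zero h1,
          add_zero]
        rfl

end NijenhuisElement

/-- For a Nijenhuis element `x` associated to an O-operator `T`, the map
`Ť(u) := T(ρ(x)u) + [Tu,x]` is itself an O-operator. -/
theorem stmt8 {K : Type*} [Field K]
    {g : Type*} [LieRing g] [LieAlgebra K g]
    {V : Type*} [AddCommGroup V] [Module K V]
    (ρ : g →ₗ⁅K⁆ Module.End K V) (T : V →ₗ[K] g) (x : g)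
    (hT : ∀ u v : V, ⁅T u, T v⁆ = T (ρ (T u) v - ρ (T v) u))
    (h1 : ∀ y z : g, ⁅⁅x, y⁆, ⁅x, z⁆⁆ = 0)
    (h2 : ∀ y : g, ∀ u : V, ρ ⁅x, y⁆ (ρ x u) = 0)
    (h3 : ∀ u : V, ⁅x, ⁅T u, x⁆ + T (ρ x u)⁆ = 0) :
    ∀ u v : V,
      ⁅T (ρ x u) + ⁅T u, x⁆, T (ρ x v) + ⁅T v, x⁆⁆
        = T (ρ x (ρ (T (ρ x u) + ⁅T u, x⁆) v - ρ (T (ρ x v) + ⁅T v, x⁆) u))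
          + ⁅T (ρ (T (ρ x u) + ⁅T u, x⁆) v - ρ (T (ρ x v) + ⁅T v, x⁆) u), x⁆ :=
  isOOperator_nijenhuisTwist ρ T hT h1 h2 h3
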